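/- Let 𝔤 be a compact Lie algebra (the Lie algebra of a compact Lie group G), and let ρ₁ : 𝔤 → 𝔰𝔬(V₁) and ρ₂ : 𝔤 → 𝔰𝔬(V₂) be two finite-dimensional orthogonal representations that are disjoint (share no isomorphic irreducible subrepresentation). Then there exists an element ω' in the tensor algebra (universal enveloping algebra) of 𝔤 such that ρ₁(ω') = id_{V₁} and ρ₂(ω') = 0, where ρᵢ is extended multiplicatively to the tensor algebra. -/

import Mathlib

/-! Since the generators act by skew-adjoint operators, the image of the tensor algebra in
`End Vᵢ` is closed under adjoints, so orthogonal complements of invariant subspaces are invariant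
and `V₁`, `V₂` are semisimple modules over the tensor algebra. Disjointness, and by taking
adjoints its reverse, makes every module endomorphism of `V₁ × V₂` block diagonal, so the
projection onto `V₁` commutes with all of them; by the Jacobson density theorem it is then the
action of an element of the tensor algebra. -/

instance IsSemisimpleModule.prod {R M₁ M₂ : Type*} [Ring R] [AddCommGroup M₁] [Module R M₁]
    [AddCommGroup M₂] [Module R M₂] [IsSemisimpleModule R M₁] [IsSemisimpleModule R M₂] :
    IsSemisimpleModule R (M₁ × M₂) := by
  have h := (IsSemisimpleModule.range (LinearMap.inl R M₁ M₂)).sup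
    (IsSemisimpleModule.range (LinearMap.inr R M₁ M₂))
  rw [LinearMap.sup_range_inl_inr] at h
  exact .congr Submodule.topEquiv.symm

theorem IsSemisimpleModule.exists_smul_eq_self_and_smul_eq_zero (K : Type*) {R M₁ M₂ : Type*}
    [CommSemiring K] [Ring R] [Algebra K R]
    [AddCommGroup M₁] [Module R M₁] [Module K M₁] [IsScalarTower K R M₁] [Module.Finite K M₁]
    [AddCommGroup M₂] [Module R M₂] [Module K M₂] [IsScalarTower K R M₂] [Module.Finite K M₂]
    [IsSemisimpleModule R M₁] [IsSemisimpleModule R M₂]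
    (h₁₂ : ∀ f : M₁ →ₗ[R] M₂, f = 0) (h₂₁ : ∀ f : M₂ →ₗ[R] M₁, f = 0) :
    ∃ r : R, (∀ m : M₁, r • m = m) ∧ ∀ m : M₂, r • m = 0 := by
  have : Module.Finite (Module.End R (M₁ × M₂)) (M₁ × M₂) := .of_restrictScalars_finite K _ _
  have hdiag (g : Module.End R (M₁ × M₂)) (m : M₁ × M₂) : g (m.1, 0) = ((g m).1, 0) := by
    have h₂ : (g (m.1, 0)).2 = 0 :=
      LinearMap.congr_fun (h₁₂ (LinearMap.snd R M₁ M₂ ∘ₗ g ∘ₗ LinearMap.inl R M₁ M₂)) m.1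
    have h₁ : (g (0, m.2)).1 = 0 :=
      LinearMap.congr_fun (h₂₁ (LinearMap.fst R M₁ M₂ ∘ₗ g ∘ₗ LinearMap.inr R M₁ M₂)) m.2
    have hm : g m = g (m.1, 0) + g (0, m.2) := by
      rw [← map_add, Prod.mk_add_mk, add_zero, zero_add]
    ext
    · simp [hm, h₁]
    · exact h₂
  let p : Module.End (Module.End R (M₁ × M₂)) (M₁ × M₂) :=
    { toFun m := (m.1, 0)
      map_add' m m' := by simp
      map_smul' g m := (hdiag g m).symm }
  obtain ⟨r, hr⟩ := Module.Finite.toModuleEnd_moduleEnd_surjective p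
  exact ⟨r, fun m => congr_arg Prod.fst (LinearMap.congr_fun hr (m, 0)),
    fun m => congr_arg Prod.snd (LinearMap.congr_fun hr (0, m))⟩

theorem IsSemisimpleModule.of_forall_exists_inner_smul {𝕜 R V : Type*} [RCLike 𝕜] [Ring R]
    [NormedAddCommGroup V] [InnerProductSpace 𝕜 V] [FiniteDimensional 𝕜 V] [Module R V]
    [SMul 𝕜 R] [IsScalarTower 𝕜 R V]
    (hadj : ∀ r : R, ∃ r' : R, ∀ v w : V, inner 𝕜 v (r • w) = inner 𝕜 (r' • v) w) :
    IsSemisimpleModule R V where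
  exists_isCompl p := by
    let q : Submodule R V :=
      { (p.restrictScalars 𝕜)ᗮ with
        smul_mem' r w hw := fun v hv => by
          obtain ⟨r', hr'⟩ := hadj r
          rw [hr']
          exact hw _ (p.smul_mem r' hv) }
    exact ⟨q, (Submodule.isCompl_restrictScalars_iff 𝕜).mp (Submodule.isCompl_orthogonal _)⟩

namespace TensorAlgebra

theorem isScalarTower_compHom_lift {K L V : Type*} [CommSemiring K] [AddCommMonoid L] [Module K L]
    [AddCommMonoid V] [Module K V] (ρ : L →ₗ[K] Module.End K V) :
    letI := Module.compHom V (lift K ρ).toRingHom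
    IsScalarTower K (TensorAlgebra K L) V :=
  letI := Module.compHom V (lift K ρ).toRingHom
  .of_algebraMap_smul fun c v => congr($((lift K ρ).commutes c) v)

theorem ι_smul_compHom_lift {K L V : Type*} [CommSemiring K] [AddCommMonoid L] [Module K L]
    [AddCommMonoid V] [Module K V] (ρ : L →ₗ[K] Module.End K V) (x : L) (v : V) :
    letI := Module.compHom V (lift K ρ).toRingHom
    ι K x • v = ρ x v :=
  congr($(lift_ι_apply ρ x) v)

variable {𝕜 L V : Type*} [RCLike 𝕜] [AddCommGroup L] [Module 𝕜 L]
  [NormedAddCommGroup V] [InnerProductSpace 𝕜 V] [FiniteDimensional 𝕜 V]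

theorem adjoint_lift_mem_range {ρ : L →ₗ[𝕜] Module.End 𝕜 V}
    (hρ : ∀ x, LinearMap.adjoint (ρ x) = -ρ x) (r : TensorAlgebra 𝕜 L) :
    LinearMap.adjoint (lift 𝕜 ρ r) ∈ (lift 𝕜 ρ).range := by
  have hstar : star (Set.range ρ) = Set.range ρ := by
    ext a
    constructor <;> rintro ⟨x, hx⟩ <;> refine ⟨-x, ?_⟩
    · rw [map_neg, ← hρ, ← LinearMap.star_eq_adjoint, hx, star_star]
    · rw [map_neg, ← hρ, ← LinearMap.star_eq_adjoint, hx]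
  rw [← LinearMap.star_eq_adjoint, ← Subalgebra.mem_star_iff, range_lift,
    Subalgebra.star_adjoin_comm, hstar, ← range_lift]
  exact AlgHom.mem_range_self _ r

theorem isSemisimpleModule_compHom_lift {ρ : L →ₗ[𝕜] Module.End 𝕜 V}
    (hρ : ∀ x, LinearMap.adjoint (ρ x) = -ρ x) :
    letI := Module.compHom V (lift 𝕜 ρ).toRingHom
    IsSemisimpleModule (TensorAlgebra 𝕜 L) V :=
  letI := Module.compHom V (lift 𝕜 ρ).toRingHom
  have := isScalarTower_compHom_lift ρ
  .of_forall_exists_inner_smul fun r => by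
    obtain ⟨r', hr'⟩ := (AlgHom.mem_range _).mp (adjoint_lift_mem_range hρ r)
    exact ⟨r', fun v w => by
      show inner 𝕜 v (lift 𝕜 ρ r w) = inner 𝕜 (lift 𝕜 ρ r' v) w
      rw [hr', LinearMap.adjoint_inner_left]⟩

end TensorAlgebra

theorem LinearMap.adjoint_comp_eq_comp_adjoint_of_skew {𝕜 V W : Type*} [RCLike 𝕜]
    [NormedAddCommGroup V] [InnerProductSpace 𝕜 V] [FiniteDimensional 𝕜 V]
    [NormedAddCommGroup W] [InnerProductSpace 𝕜 W] [FiniteDimensional 𝕜 W]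
    {f : W →ₗ[𝕜] V} {a : Module.End 𝕜 V} {b : Module.End 𝕜 W}
    (ha : LinearMap.adjoint a = -a) (hb : LinearMap.adjoint b = -b) (h : f ∘ₗ b = a ∘ₗ f) :
    LinearMap.adjoint f ∘ₗ a = b ∘ₗ LinearMap.adjoint f := by
  have := congr_arg LinearMap.adjoint h
  rw [LinearMap.adjoint_comp, LinearMap.adjoint_comp, ha, hb] at this
  simpa using this.symm

open scoped RealInnerProductSpace

theorem disjoint_representations_separating_element
    {L : Type*} [LieRing L] [LieAlgebra ℝ L]
    {V₁ V₂ : Type*}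
    [NormedAddCommGroup V₁] [InnerProductSpace ℝ V₁] [FiniteDimensional ℝ V₁]
    [NormedAddCommGroup V₂] [InnerProductSpace ℝ V₂] [FiniteDimensional ℝ V₂]
    (ρ₁ : L →ₗ[ℝ] Module.End ℝ V₁) (ρ₂ : L →ₗ[ℝ] Module.End ℝ V₂)
    (hρ₁skew : ∀ x : L, LinearMap.adjoint (ρ₁ x) = -(ρ₁ x))
    (hρ₂skew : ∀ x : L, LinearMap.adjoint (ρ₂ x) = -(ρ₂ x))
    (hdisj : ∀ φ : V₁ →ₗ[ℝ] V₂,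
      (∀ (x : L) (v : V₁), φ (ρ₁ x v) = ρ₂ x (φ v)) → φ = 0) :
    ∃ ω' : TensorAlgebra ℝ L,
      TensorAlgebra.lift ℝ ρ₁ ω' = 1 ∧ TensorAlgebra.lift ℝ ρ₂ ω' = 0 := by
  let := Module.compHom V₁ (TensorAlgebra.lift ℝ ρ₁).toRingHom
  let := Module.compHom V₂ (TensorAlgebra.lift ℝ ρ₂).toRingHom
  have := TensorAlgebra.isScalarTower_compHom_lift ρ₁
  have := TensorAlgebra.isScalarTower_compHom_lift ρ₂
  have := TensorAlgebra.isSemisimpleModule_compHom_lift hρ₁skew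
  have := TensorAlgebra.isSemisimpleModule_compHom_lift hρ₂skew
  have hι₁ := TensorAlgebra.ι_smul_compHom_lift ρ₁
  have hι₂ := TensorAlgebra.ι_smul_compHom_lift ρ₂
  have h₁₂ : ∀ f : V₁ →ₗ[TensorAlgebra ℝ L] V₂, f = 0 := fun f =>
    LinearMap.restrictScalars_injective ℝ <| hdisj _ fun x v => by
      simpa only [hι₁, hι₂, LinearMap.coe_restrictScalars] using
        f.map_smul (TensorAlgebra.ι ℝ x) v
  have h₂₁ : ∀ f : V₂ →ₗ[TensorAlgebra ℝ L] V₁, f = 0 := fun f => by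
    have hf : ∀ x, f.restrictScalars ℝ ∘ₗ ρ₂ x = ρ₁ x ∘ₗ f.restrictScalars ℝ := fun x =>
      LinearMap.ext fun v => by
        simpa only [hι₁, hι₂, LinearMap.comp_apply, LinearMap.coe_restrictScalars] using
          f.map_smul (TensorAlgebra.ι ℝ x) v
    have := hdisj (LinearMap.adjoint (f.restrictScalars ℝ)) fun x v => LinearMap.congr_fun
      (LinearMap.adjoint_comp_eq_comp_adjoint_of_skew (hρ₁skew x) (hρ₂skew x) (hf x)) v
    apply LinearMap.restrictScalars_injective ℝ
    simpa using congr_arg LinearMap.adjoint this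
  obtain ⟨ω', h₁, h₂⟩ := IsSemisimpleModule.exists_smul_eq_self_and_smul_eq_zero ℝ h₁₂ h₂₁
  exact ⟨ω', LinearMap.ext h₁, LinearMap.ext h₂⟩
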